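/- arXiv:2004.14830 — 4 statements merged into one kernel-verified Lean document; each statement's English description precedes it below -/
import Mathlib

section
/- Fix real constants c₀, c₁, c₂ with c₁, c₂ ≥ 0, set μ₀ = c₀ + c₂, and let v(s) = Σ_{k=1}^K a_k e^{μ_k s} with μ_k ≠ μ₀ for all k. Suppose v(t) ≥ 0 for all t ≥ 0, and that the continuous function u₀ satisfies e^{-c₀ t} u₀(t) ≤ c₁ + ∫₀ᵗ e^{-c₀ s} v(s) ds + ∫₀ᵗ c₂ e^{-c₀ s} u₀(s) ds for all t ≥ 0. Then u₀(t) ≤ c₁ e^{μ₀ t} + Σ_{k=1}^K (a_k/(μ_k - μ₀))(e^{μ_k t} - e^{μ₀ t}) for all t ≥ 0, and moreover the sum Σ_{k=1}^K (a_k/(μ_k - μ₀))(e^{μ_k t} - e^{μ₀ t}) is nonnegative for all t ≥ 0. -/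
open Real intervalIntegral

private lemma ftc0 {g : ℝ → ℝ} (hg : Continuous g) (t : ℝ) :
    HasDerivAt (fun u => ∫ s in (0:ℝ)..u, g s) (g t) t :=
  (hg.integral_hasStrictDerivAt 0 t).hasDerivAt

/-- exponential integral -/
private lemma int_exp_mul (c t : ℝ) (hc : c ≠ 0) :
    ∫ s in (0:ℝ)..t, Real.exp (c * s) = (Real.exp (c * t) - 1) / c := by
  have h : ∀ x : ℝ, HasDerivAt (fun s => Real.exp (c * s) / c) (Real.exp (c * x)) x := by
    intro x
    have := ((hasDerivAt_id x).const_mul c).exp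
    simpa [mul_comm, mul_div_cancel_left₀ _ hc] using this.div_const c
  have := intervalIntegral.integral_eq_sub_of_hasDerivAt (f := fun s => Real.exp (c * s) / c)
    (fun x _ => h x) ((Real.continuous_exp.comp (continuous_const.mul continuous_id)).intervalIntegrable 0 t)
  simp only [mul_zero, Real.exp_zero] at this
  rw [this]; ring

/-- Gronwall integral form -/
private lemma gron (c₁ c₂ : ℝ) (hc₂ : 0 ≤ c₂) (f w : ℝ → ℝ) (hf : Continuous f) (hw : Continuous w)
    (h : ∀ t, 0 ≤ t → w t ≤ (c₁ + ∫ s in (0:ℝ)..t, f s) + ∫ s in (0:ℝ)..t, c₂ * w s) :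
    ∀ t, 0 ≤ t → w t ≤ Real.exp (c₂ * t) * (c₁ + ∫ s in (0:ℝ)..t, Real.exp (-(c₂ * s)) * f s) := by
  set G : ℝ → ℝ := fun t => (c₁ + ∫ s in (0:ℝ)..t, f s) + ∫ s in (0:ℝ)..t, c₂ * w s with hG
  set φ : ℝ → ℝ := fun t => (c₁ + ∫ s in (0:ℝ)..t, Real.exp (-(c₂ * s)) * f s)
      - Real.exp (-(c₂ * t)) * G t with hφ
  have hGd : ∀ t, HasDerivAt G (f t + c₂ * w t) t := by
    intro t
    exact ((ftc0 hf t).const_add c₁).add (ftc0 (continuous_const.mul hw) t)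
  have hed : ∀ t : ℝ, HasDerivAt (fun s => Real.exp (-(c₂ * s))) (-c₂ * Real.exp (-(c₂ * t))) t := by
    intro t
    have := (((hasDerivAt_id t).const_mul c₂).neg).exp
    simpa [mul_comm] using this
  have hφd : ∀ t, HasDerivAt φ (c₂ * Real.exp (-(c₂ * t)) * (G t - w t)) t := by
    intro t
    have h1 : HasDerivAt (fun u => c₁ + ∫ s in (0:ℝ)..u, Real.exp (-(c₂ * s)) * f s)
        (Real.exp (-(c₂ * t)) * f t) t :=
      (ftc0 ((Real.continuous_exp.comp (continuous_const.mul continuous_id).neg).mul hf) t).const_add c₁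
    have h2 := (hed t).mul (hGd t)
    have := h1.sub h2
    exact this.congr_deriv (by ring)
  have hGcont : Continuous G := by
    apply Continuous.add (Continuous.add continuous_const _) _
    · exact intervalIntegral.continuous_primitive (fun a b => hf.intervalIntegrable a b) 0
    · exact intervalIntegral.continuous_primitive
        (fun a b => (continuous_const.mul hw).intervalIntegrable a b) 0
  have hφcont : Continuous φ := by
    apply Continuous.sub (Continuous.add continuous_const _) _
    · exact intervalIntegral.continuous_primitive
        (fun a b => ((Real.continuous_exp.comp (continuous_const.mul continuous_id).neg).mul hf).intervalIntegrable a b) 0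
    · exact (Real.continuous_exp.comp (continuous_const.mul continuous_id).neg).mul hGcont
  have hmono : MonotoneOn φ (Set.Ici (0:ℝ)) := by
    apply monotoneOn_of_deriv_nonneg (convex_Ici 0) hφcont.continuousOn
    · intro t ht
      exact (hφd t).differentiableAt.differentiableWithinAt
    · intro t ht
      rw [interior_Ici] at ht
      rw [(hφd t).deriv]
      have hGw : w t ≤ G t := h t (le_of_lt ht)
      have : (0:ℝ) ≤ G t - w t := by linarith
      positivity
  intro t ht
  have hφ0 : φ 0 = 0 := by simp [hφ, hG]
  have := hmono (Set.self_mem_Ici) (Set.mem_Ici.mpr ht) ht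
  rw [hφ0] at this
  have hGle : G t ≤ Real.exp (c₂ * t) * (c₁ + ∫ s in (0:ℝ)..t, Real.exp (-(c₂ * s)) * f s) := by
    have he : Real.exp (-(c₂ * t)) * G t ≤ c₁ + ∫ s in (0:ℝ)..t, Real.exp (-(c₂ * s)) * f s := by
      simpa [hφ, sub_nonneg] using this
    calc G t = Real.exp (c₂ * t) * (Real.exp (-(c₂ * t)) * G t) := by
          rw [← mul_assoc, ← Real.exp_add]; simp
      _ ≤ _ := by
          apply mul_le_mul_of_nonneg_left he (le_of_lt (Real.exp_pos _))
  exact le_trans (h t ht) hGle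

/-- Gronwall-type lemma with exponential forcing terms. -/
theorem stmt1 (K : ℕ) (c₀ c₁ c₂ : ℝ) (hc₁ : 0 ≤ c₁) (hc₂ : 0 ≤ c₂)
    (μ : Fin K → ℝ) (a : Fin K → ℝ)
    (hμ : ∀ k, μ k ≠ c₀ + c₂)
    (u₀ : ℝ → ℝ) (hu₀ : Continuous u₀) (hu₀nn : ∀ t, 0 ≤ t → 0 ≤ u₀ t)
    (hv : ∀ t, 0 ≤ t → 0 ≤ ∑ k, a k * Real.exp (μ k * t))
    (hineq : ∀ t, 0 ≤ t →
      Real.exp (-(c₀ * t)) * u₀ t ≤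
        (c₁ + ∫ s in (0:ℝ)..t, Real.exp (-(c₀ * s)) * ∑ k, a k * Real.exp (μ k * s))
          + ∫ s in (0:ℝ)..t, c₂ * Real.exp (-(c₀ * s)) * u₀ s) :
    ∀ t, 0 ≤ t →
      (u₀ t ≤ c₁ * Real.exp ((c₀ + c₂) * t)
          + ∑ k, a k / (μ k - (c₀ + c₂)) * (Real.exp (μ k * t) - Real.exp ((c₀ + c₂) * t)))
      ∧ 0 ≤ ∑ k, a k / (μ k - (c₀ + c₂)) * (Real.exp (μ k * t) - Real.exp ((c₀ + c₂) * t)) := by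
  set μ₀ := c₀ + c₂ with hμ₀
  set v : ℝ → ℝ := fun s => ∑ k, a k * Real.exp (μ k * s) with hvdef
  have hvcont : Continuous v := by
    apply continuous_finset_sum
    intro k _
    exact continuous_const.mul (Real.continuous_exp.comp (continuous_const.mul continuous_id))
  -- key integral identity
  have hI : ∀ t : ℝ, ∫ s in (0:ℝ)..t, Real.exp (-(μ₀ * s)) * v s
      = ∑ k, a k / (μ k - μ₀) * (Real.exp ((μ k - μ₀) * t) - 1) := by
    intro t
    have : ∀ s : ℝ, Real.exp (-(μ₀ * s)) * v s = ∑ k, a k * Real.exp ((μ k - μ₀) * s) := by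
      intro s
      rw [hvdef, Finset.mul_sum]
      congr 1; ext k
      rw [show (μ k - μ₀) * s = -(μ₀ * s) + μ k * s by ring, Real.exp_add]; ring
    simp only [this]
    rw [intervalIntegral.integral_finset_sum]
    · congr 1; ext k
      rw [intervalIntegral.integral_const_mul, int_exp_mul _ _ (sub_ne_zero.mpr (hμ k))]
      ring
    · intro k _
      exact (continuous_const.mul (Real.continuous_exp.comp
        (continuous_const.mul continuous_id))).intervalIntegrable 0 t
  have hSum : ∀ t : ℝ, Real.exp (μ₀ * t) * ∑ k, a k / (μ k - μ₀) * (Real.exp ((μ k - μ₀) * t) - 1)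
      = ∑ k, a k / (μ k - μ₀) * (Real.exp (μ k * t) - Real.exp (μ₀ * t)) := by
    intro t
    rw [Finset.mul_sum]
    congr 1; ext k
    rw [show μ k * t = (μ k - μ₀) * t + μ₀ * t by ring, Real.exp_add]
    ring
  -- apply gronwall
  have hgr := gron c₁ c₂ hc₂ (fun s => Real.exp (-(c₀ * s)) * v s)
    (fun s => Real.exp (-(c₀ * s)) * u₀ s)
    ((Real.continuous_exp.comp (continuous_const.mul continuous_id).neg).mul hvcont)
    ((Real.continuous_exp.comp (continuous_const.mul continuous_id).neg).mul hu₀)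
    (by
      intro t ht
      have := hineq t ht
      convert this using 2
      apply intervalIntegral.integral_congr
      intro s _
      ring)
  intro t ht
  have key := hgr t ht
  have hcomb : ∀ s : ℝ, Real.exp (-(c₂ * s)) * (Real.exp (-(c₀ * s)) * v s)
      = Real.exp (-(μ₀ * s)) * v s := by
    intro s
    rw [← mul_assoc, ← Real.exp_add, hμ₀]
    ring_nf
  rw [show (∫ s in (0:ℝ)..t, Real.exp (-(c₂ * s)) * (Real.exp (-(c₀ * s)) * v s))
      = ∫ s in (0:ℝ)..t, Real.exp (-(μ₀ * s)) * v s from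
    intervalIntegral.integral_congr (fun s _ => hcomb s), hI t] at key
  -- nonnegativity of sum
  have hInn : 0 ≤ ∫ s in (0:ℝ)..t, Real.exp (-(μ₀ * s)) * v s := by
    apply intervalIntegral.integral_nonneg ht
    intro s hs
    exact mul_nonneg (le_of_lt (Real.exp_pos _)) (hv s hs.1)
  rw [hI t] at hInn
  have hSnn : 0 ≤ ∑ k, a k / (μ k - μ₀) * (Real.exp (μ k * t) - Real.exp (μ₀ * t)) := by
    rw [← hSum t]
    exact mul_nonneg (le_of_lt (Real.exp_pos _)) hInn
  constructor
  · have h1 : u₀ t = Real.exp (c₀ * t) * (Real.exp (-(c₀ * t)) * u₀ t) := by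
      rw [← mul_assoc, ← Real.exp_add]; simp
    have hee : Real.exp (c₀ * t) * Real.exp (c₂ * t) = Real.exp (μ₀ * t) := by
      rw [← Real.exp_add, hμ₀]; ring_nf
    have h2 : Real.exp (c₀ * t) * (Real.exp (c₂ * t)
        * (c₁ + ∑ k, a k / (μ k - μ₀) * (Real.exp ((μ k - μ₀) * t) - 1)))
        = c₁ * Real.exp (μ₀ * t) + ∑ k, a k / (μ k - μ₀) * (Real.exp (μ k * t) - Real.exp (μ₀ * t)) := by
      rw [← mul_assoc, hee, mul_add, hSum t, mul_comm (Real.exp (μ₀ * t)) c₁]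
    rw [h1, ← h2]
    exact mul_le_mul_of_nonneg_left key (le_of_lt (Real.exp_pos _))
  · exact hSnn
end

section
/- Let X_∞ be a Banach space and consider the block operator M₁ = [[A, B],[C, D]] on ℂ^N × X_∞, where A is an N×N matrix with distinct eigenvalues λ₁,…,λ_N and eigenvectors v₁,…,v_N, dual eigenvectors u₁,…,u_N normalized so that uᵢ* v_j = δᵢⱼ, and σ(A) ∩ σ(D) = ∅. Define W_b : X_∞ → ℂ^N by W_b = Σ_k v_k [(D* - λ_k* I)⁻¹ B* u_k*] and W_c : ℂ^N → X_∞ by W_c = Σ_k −[(D − λ_k I)⁻¹ C v_k] u_k*. Let P_b = [[I, W_b],[0, I]] and P_c = [[I, 0],[W_c, I]]. Then (P_c P_b)⁻¹ M₁ (P_c P_b) = diag(A, D) + E, where E = [[(I + W_b W_c) B W_c, B W_c W_b + W_b W_c B (I + W_c W_b)], [−W_c B W_c, −W_c B (I + W_c W_b)]]. -/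
/-- Block approximate diagonalization on ℂ^N × X∞. -/
theorem stmt3 {Xinf : Type*} [NormedAddCommGroup Xinf] [NormedSpace ℂ Xinf]
    (N : ℕ)
    (A : EuclideanSpace ℂ (Fin N) →L[ℂ] EuclideanSpace ℂ (Fin N))
    (B : Xinf →L[ℂ] EuclideanSpace ℂ (Fin N))
    (C : EuclideanSpace ℂ (Fin N) →L[ℂ] Xinf)
    (D : Xinf →L[ℂ] Xinf)
    (lam : Fin N → ℂ) (hdist : Function.Injective lam)
    (v : Fin N → EuclideanSpace ℂ (Fin N))
    (u : Fin N → (EuclideanSpace ℂ (Fin N) →L[ℂ] ℂ))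
    (heig : ∀ k, A (v k) = lam k • v k)
    (hdual : ∀ k x, u k (A x) = lam k * u k x)
    (hnorm : ∀ i j, u i (v j) = if i = j then 1 else 0)
    (hspan : Submodule.span ℂ (Set.range v) = ⊤)
    -- `R k` is the bounded inverse of `D - lam k • I`, encoding σ(A) ∩ σ(D) = ∅
    (R : Fin N → (Xinf →L[ℂ] Xinf))
    (hR₁ : ∀ k y, D (R k y) - lam k • R k y = y)
    (hR₂ : ∀ k y, R k (D y - lam k • y) = y) :
    let Wb : Xinf → EuclideanSpace ℂ (Fin N) := fun y => ∑ k, u k (B (R k y)) • v k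
    let Wc : EuclideanSpace ℂ (Fin N) → Xinf := fun x => -∑ k, u k x • R k (C (v k))
    ∀ x y,
      (let p := (x + Wb y, y)                       -- P_b (x,y)
       let q := (p.1, Wc p.1 + p.2)                 -- P_c P_b (x,y)
       let m := (A q.1 + B q.2, C q.1 + D q.2)      -- M₁ (P_c P_b (x,y))
       let r := (m.1, m.2 - Wc m.1)                 -- P_c⁻¹ ( ... )
       (r.1 - Wb r.2, r.2))                         -- P_b⁻¹ P_c⁻¹ M₁ P_c P_b (x,y)
      = (A x + ((B (Wc x) + Wb (Wc (B (Wc x))))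
              + (B (Wc (Wb y)) + Wb (Wc (B (y + Wc (Wb y)))))),
         D y + (-(Wc (B (Wc x))) + -(Wc (B (y + Wc (Wb y)))))) := by
  intro Wb Wc x y
  -- reconstruction
  have hrec : ∀ z : EuclideanSpace ℂ (Fin N), ∑ k, u k z • v k = z := by
    intro z
    have hz : z ∈ Submodule.span ℂ (Set.range v) := hspan ▸ Submodule.mem_top
    induction hz using Submodule.span_induction with
    | mem w hw =>
      obtain ⟨j, rfl⟩ := hw
      simp [hnorm, ite_smul]
    | zero => simp
    | add a b _ _ iha ihb =>
      simp only [map_add, add_smul, Finset.sum_add_distrib, iha, ihb]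
    | smul c a _ iha =>
      simp only [map_smul, smul_eq_mul, mul_smul, ← Finset.smul_sum, iha]
  have hWb_add : ∀ a b, Wb (a + b) = Wb a + Wb b := by
    intro a b
    simp only [Wb, map_add, add_smul, Finset.sum_add_distrib]
  have hWc_add : ∀ a b, Wc (a + b) = Wc a + Wc b := by
    intro a b
    simp only [Wc, map_add, add_smul, Finset.sum_add_distrib, neg_add]
  have hWb_neg : ∀ a, Wb (-a) = -Wb a := by
    intro a
    simp only [Wb, map_neg, neg_smul, Finset.sum_neg_distrib]
  have hWc_neg : ∀ a, Wc (-a) = -Wc a := by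
    intro a
    simp only [Wc, map_neg, neg_smul, Finset.sum_neg_distrib, neg_neg]
  have hAWb : ∀ z, Wb (D z) = A (Wb z) + B z := by
    intro z
    have hRD : ∀ k, R k (D z) = z + lam k • R k z := by
      intro k
      have := hR₂ k z
      rw [map_sub, map_smul] at this
      linear_combination (norm := module) this
    simp only [Wb, hRD, map_add, map_smul, map_sum, smul_eq_mul, add_smul, mul_smul,
      Finset.sum_add_distrib, heig, hrec]
    rw [add_comm]
    congr 1
    exact Finset.sum_congr rfl fun k _ => by rw [smul_comm]
  have hWcA : ∀ z, Wc (A z) = C z + D (Wc z) := by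
    intro z
    have h1 : D (Wc z) = -∑ k, u k z • (C (v k) + lam k • R k (C (v k))) := by
      simp only [Wc, map_neg, map_sum, map_smul]
      congr 1
      exact Finset.sum_congr rfl fun k _ => by
        have := hR₁ k (C (v k))
        rw [show D (R k (C (v k))) = C (v k) + lam k • R k (C (v k)) by
          linear_combination (norm := module) this]
    have h2 : C z = ∑ k, u k z • C (v k) := by
      conv_lhs => rw [← hrec z]
      simp [map_sum, map_smul]
    rw [h1, h2]
    simp only [Wc, hdual, smul_add, Finset.sum_add_distrib, mul_smul, neg_add]
    have hc : ∀ k : Fin N, lam k • u k z • R k (C (v k)) = u k z • lam k • R k (C (v k)) :=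
      fun k => smul_comm _ _ _
    simp only [hc]
    abel
  simp only [Prod.mk.injEq]
  constructor
  · simp only [hWb_add, hWc_add, map_add, map_sub, sub_eq_add_neg, hWb_neg, hWc_neg,
      neg_add, hAWb, hWcA, neg_neg]
    abel
  · simp only [hWb_add, hWc_add, map_add, map_sub, sub_eq_add_neg, hWb_neg, hWc_neg,
      neg_add, hAWb, hWcA, neg_neg]
    abel
end

section
/- Let u_j (1 ≤ j ≤ N_λ) be nonnegative functions on [0,T] satisfying e^{-λ_j t} u_j(t) ≤ B_j ω + ∫₀ᵗ e^{-λ_j τ} Σ_k e^{μ_k τ} A_{j,k} ω dτ + ∫₀ᵗ e^{-λ_j τ} Σ_i H_j^i u_i(τ) dτ, and suppose u_i(t) ≤ Σ_k e^{μ_k t} G_{i,k} ω for all i, where γ_j := λ_j + H_j^j, the exponents μ_k are pairwise distinct and {γ_j} ⊆ {μ_k}. Fix j and assume A_{j,k} = 0 and G_{i,k} = 0 whenever μ_k = γ_j. Then u_j(t) ≤ e^{γ_j t} B_j ω + Σ_{k: μ_k ≠ γ_j} ((e^{μ_k t} − e^{γ_j t})/(μ_k − γ_j)) (A_{j,k}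 + Σ_{i≠j} H_j^i G_{i,k}) ω for all t ∈ [0,T]. -/
open MeasureTheory intervalIntegral Finset

lemma myPrimitive {h : ℝ → ℝ} (hc : Continuous h) (s : ℝ) :
    HasDerivAt (fun x => ∫ τ in (0:ℝ)..x, h τ) (h s) s :=
  intervalIntegral.integral_hasDerivAt_right (hc.intervalIntegrable 0 s)
    (hc.stronglyMeasurableAtFilter _ _) hc.continuousAt

lemma myIntExp (a t : ℝ) (ha : a ≠ 0) :
    ∫ τ in (0:ℝ)..t, Real.exp (a*τ) = (Real.exp (a*t) - 1)/a := by
  have h : ∀ τ ∈ Set.uIcc (0:ℝ) t,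
      HasDerivAt (fun x => Real.exp (a*x)/a) (Real.exp (a*τ)) τ := by
    intro τ _
    have h1 : HasDerivAt (fun x : ℝ => a*x) a τ := by
      simpa using (hasDerivAt_id τ).const_mul a
    have h2 := ((Real.hasDerivAt_exp (a*τ)).comp τ h1).div_const a
    rw [mul_div_assoc, div_self ha, mul_one] at h2
    exact h2
  rw [intervalIntegral.integral_eq_sub_of_hasDerivAt h
    ((Real.continuous_exp.comp (continuous_const.mul continuous_id)).intervalIntegrable _ _)]
  simp [Real.exp_zero]
  ring

lemma myAlg (a b c d e : ℝ) (hd : d ≠ 0) (h : a * c = e) :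
    a * ((c - 1) / d * b) = (e - a) / d * b := by
  field_simp
  linear_combination b * h

/-- General bootstrap improvement operator for systems of Gronwall inequalities. -/
theorem stmt10 (Nl Nm M : ℕ) (lam : Fin Nl → ℝ) (μ : Fin Nm → ℝ)
    (H : Fin Nl → Fin Nl → ℝ) (hH : ∀ i j, 0 ≤ H i j)
    (A : Fin Nl → Fin Nm → Fin M → ℝ) (B : Fin Nl → Fin M → ℝ)
    (G : Fin Nl → Fin Nm → Fin M → ℝ)
    (hA : ∀ j k m, 0 ≤ A j k m) (hB : ∀ j m, 0 ≤ B j m) (hG : ∀ i k m, 0 ≤ G i k m)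
    (ω : Fin M → ℝ) (hω : ∀ m, 0 < ω m)
    (hμdist : Function.Injective μ)
    (hsub : ∀ j : Fin Nl, ∃ k, μ k = lam j + H j j)
    (T : ℝ) (hT : 0 ≤ T)
    (u : Fin Nl → ℝ → ℝ) (hucont : ∀ i, Continuous (u i))
    (hunn : ∀ i, ∀ t ∈ Set.Icc (0:ℝ) T, 0 ≤ u i t)
    (hineq : ∀ j, ∀ t ∈ Set.Icc (0:ℝ) T,
      Real.exp (-(lam j * t)) * u j t ≤ (∑ m, B j m * ω m)
        + (∫ τ in (0:ℝ)..t, Real.exp (-(lam j * τ)) * ∑ k, Real.exp (μ k * τ) * ∑ m, A j k m * ω m)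
        + ∫ τ in (0:ℝ)..t, Real.exp (-(lam j * τ)) * ∑ i, H j i * u i τ)
    (hGb : ∀ i, ∀ t ∈ Set.Icc (0:ℝ) T, u i t ≤ ∑ k, Real.exp (μ k * t) * ∑ m, G i k m * ω m)
    (j : Fin Nl)
    (hA0 : ∀ k, μ k = lam j + H j j → ∀ m, A j k m = 0)
    (hG0 : ∀ i k, μ k = lam j + H j j → ∀ m, G i k m = 0) :
    ∀ t ∈ Set.Icc (0:ℝ) T,
      u j t ≤ Real.exp ((lam j + H j j) * t) * (∑ m, B j m * ω m)
        + ∑ k ∈ Finset.univ.filter (fun k => μ k ≠ lam j + H j j),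
            (Real.exp (μ k * t) - Real.exp ((lam j + H j j) * t)) / (μ k - (lam j + H j j))
              * ((∑ m, A j k m * ω m) + ∑ i ∈ Finset.univ.erase j, H j i * ∑ m, G i k m * ω m) := by
  intro t ht
  set γ : ℝ := lam j + H j j with hγ
  set Bω : ℝ := ∑ m, B j m * ω m with hBω
  set C : Fin Nm → ℝ := fun k => (∑ m, A j k m * ω m)
      + ∑ i ∈ Finset.univ.erase j, H j i * ∑ m, G i k m * ω m with hC
  have hC0 : ∀ k, μ k = γ → C k = 0 := by
    intro k hk
    simp [hC, hA0 k hk, hG0 _ k hk]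
  set g : ℝ → ℝ := fun τ => Real.exp (-(lam j * τ)) * ∑ k, Real.exp (μ k * τ) * C k with hg
  have hgcont : Continuous g := by fun_prop
  set v : ℝ → ℝ := fun τ => Real.exp (-(lam j * τ)) * u j τ with hv
  have hvcont : Continuous v := by
    have := hucont j
    fun_prop
  have hcont1 : Continuous (fun τ =>
      Real.exp (-(lam j * τ)) * ∑ k, Real.exp (μ k * τ) * ∑ m, A j k m * ω m) := by fun_prop
  have hcont2 : Continuous (fun τ => Real.exp (-(lam j * τ)) * ∑ i, H j i * u i τ) := by
    have := hucont
    fun_prop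
  -- key integral inequality
  have key : ∀ s ∈ Set.Icc (0:ℝ) T,
      v s ≤ Bω + (∫ τ in (0:ℝ)..s, g τ) + H j j * ∫ τ in (0:ℝ)..s, v τ := by
    intro s hs
    have h0 := hineq j s hs
    refine h0.trans ?_
    have hint : (∫ τ in (0:ℝ)..s,
          Real.exp (-(lam j * τ)) * ∑ k, Real.exp (μ k * τ) * ∑ m, A j k m * ω m)
        + (∫ τ in (0:ℝ)..s, Real.exp (-(lam j * τ)) * ∑ i, H j i * u i τ)
        ≤ (∫ τ in (0:ℝ)..s, g τ) + H j j * ∫ τ in (0:ℝ)..s, v τ := by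
      rw [← intervalIntegral.integral_add (hcont1.intervalIntegrable _ _)
        (hcont2.intervalIntegrable _ _), ← intervalIntegral.integral_const_mul,
        ← intervalIntegral.integral_add (g := fun x => H j j * v x) (hgcont.intervalIntegrable _ _)
        ((continuous_const.mul hvcont).intervalIntegrable _ _)]
      apply intervalIntegral.integral_mono_on hs.1
        ((hcont1.add hcont2).intervalIntegrable _ _)
        ((hgcont.add (continuous_const.mul hvcont)).intervalIntegrable _ _)
      intro τ hτ
      have hτT : τ ∈ Set.Icc (0:ℝ) T := ⟨hτ.1, hτ.2.trans hs.2⟩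
      have hepos : (0:ℝ) < Real.exp (-(lam j * τ)) := Real.exp_pos _
      -- split the sum over i
      have hsplit : ∑ i, H j i * u i τ
          = H j j * u j τ + ∑ i ∈ Finset.univ.erase j, H j i * u i τ :=
        (Finset.add_sum_erase _ _ (Finset.mem_univ j)).symm
      have hbound : ∑ i ∈ Finset.univ.erase j, H j i * u i τ
          ≤ ∑ i ∈ Finset.univ.erase j, H j i * ∑ k, Real.exp (μ k * τ) * ∑ m, G i k m * ω m := by
        refine Finset.sum_le_sum fun i _ => ?_
        exact mul_le_mul_of_nonneg_left (hGb i τ hτT) (hH j i)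
      have hswap : ∑ i ∈ Finset.univ.erase j,
            H j i * ∑ k, Real.exp (μ k * τ) * ∑ m, G i k m * ω m
          = ∑ k, Real.exp (μ k * τ) * ∑ i ∈ Finset.univ.erase j,
              H j i * ∑ m, G i k m * ω m := by
        simp only [Finset.mul_sum]
        rw [Finset.sum_comm]
        exact Finset.sum_congr rfl fun k _ => Finset.sum_congr rfl fun i _ =>
          Finset.sum_congr rfl fun m _ => by ring
      calc Real.exp (-(lam j * τ)) * (∑ k, Real.exp (μ k * τ) * ∑ m, A j k m * ω m)
            + Real.exp (-(lam j * τ)) * ∑ i, H j i * u i τ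
          ≤ Real.exp (-(lam j * τ)) * (∑ k, Real.exp (μ k * τ) * ∑ m, A j k m * ω m)
            + Real.exp (-(lam j * τ)) * (H j j * u j τ
              + ∑ k, Real.exp (μ k * τ) * ∑ i ∈ Finset.univ.erase j,
                  H j i * ∑ m, G i k m * ω m) := by
            rw [hsplit]
            refine add_le_add_right (mul_le_mul_of_nonneg_left ?_ hepos.le) _
            rw [← hswap]
            exact add_le_add_right hbound _
        _ = g τ + H j j * v τ := by
            have hgτ : g τ = Real.exp (-(lam j * τ)) *
                ((∑ k, Real.exp (μ k * τ) * ∑ m, A j k m * ω m)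
                  + ∑ k, Real.exp (μ k * τ) * ∑ i ∈ Finset.univ.erase j,
                      H j i * ∑ m, G i k m * ω m) := by
              simp only [hg]
              congr 1
              rw [← Finset.sum_add_distrib]
              exact Finset.sum_congr rfl fun k _ => by simp only [hC]; ring
            rw [hgτ]
            simp only [hv]
            ring
    linarith
  -- the majorant w
  set w : ℝ → ℝ := fun s => Bω + (∫ τ in (0:ℝ)..s, g τ) + H j j * ∫ τ in (0:ℝ)..s, v τ with hw
  have hvw : ∀ s ∈ Set.Icc (0:ℝ) T, v s ≤ w s := key
  have hwderiv : ∀ s, HasDerivAt w (g s + H j j * v s) s := by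
    intro s
    exact ((myPrimitive hgcont s).const_add Bω).add ((myPrimitive hvcont s).const_mul (H j j))
  -- the function F
  set E : ℝ → ℝ := fun s => Real.exp (-(H j j * s)) with hE
  set F : ℝ → ℝ := fun s => Bω + (∫ τ in (0:ℝ)..s, E τ * g τ) - E s * w s with hF
  have hEg : Continuous fun τ => E τ * g τ := by
    simp only [hE]
    fun_prop
  have hEderiv : ∀ s, HasDerivAt E (-(H j j) * E s) s := by
    intro s
    have h1 : HasDerivAt (fun x : ℝ => -(H j j * x)) (-(H j j)) s := by
      simpa using ((hasDerivAt_id' s).const_mul (-(H j j)))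
    simpa [hE, mul_comm] using h1.exp
  have hFderiv : ∀ s, HasDerivAt F (E s * (H j j * (w s - v s))) s := by
    intro s
    have h1 := ((myPrimitive hEg s).const_add Bω).sub ((hEderiv s).mul (hwderiv s))
    refine h1.congr_deriv ?_
    simp only [hw, hE]
    ring
  have hFmono : MonotoneOn F (Set.Icc 0 T) := by
    apply monotoneOn_of_deriv_nonneg (convex_Icc 0 T)
    · exact fun s _ => ((hFderiv s).differentiableAt.continuousAt.continuousWithinAt)
    · exact fun s _ => ((hFderiv s).differentiableAt.differentiableWithinAt)
    · intro s hs
      rw [interior_Icc] at hs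
      rw [(hFderiv s).deriv]
      have h2 := hvw s ⟨hs.1.le, hs.2.le⟩
      exact mul_nonneg (Real.exp_pos _).le (mul_nonneg (hH j j) (sub_nonneg.2 h2))
  have hF0 : F 0 = 0 := by
    simp [hF, hE, hw]
  have hFt : 0 ≤ F t := by
    rw [← hF0]
    exact hFmono (Set.left_mem_Icc.2 hT) ht ht.1
  -- compute the integral ∫ E g
  have hint2 : (∫ τ in (0:ℝ)..t, E τ * g τ)
      = ∑ k, C k * ∫ τ in (0:ℝ)..t, Real.exp ((μ k - γ) * τ) := by
    have hEq : ∀ τ : ℝ, E τ * g τ = ∑ k, C k * Real.exp ((μ k - γ) * τ) := by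
      intro τ
      simp only [hE, hg, Finset.mul_sum]
      refine Finset.sum_congr rfl fun k _ => ?_
      have e1 : Real.exp (-(H j j * τ)) * Real.exp (-(lam j * τ)) * Real.exp (μ k * τ)
          = Real.exp ((μ k - γ) * τ) := by
        rw [← Real.exp_add, ← Real.exp_add]
        congr 1
        rw [hγ]; ring
      linear_combination (C k) * e1
    simp only [hEq]
    rw [intervalIntegral.integral_finset_sum]
    · refine Finset.sum_congr rfl fun k _ => ?_
      rw [intervalIntegral.integral_const_mul]
    · intro k _
      exact (Continuous.intervalIntegrable (by fun_prop) _ _)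
  have hsum : ∑ k, C k * (∫ τ in (0:ℝ)..t, Real.exp ((μ k - γ) * τ))
      = ∑ k ∈ Finset.univ.filter (fun k => μ k ≠ γ),
          (Real.exp ((μ k - γ) * t) - 1) / (μ k - γ) * C k := by
    rw [Finset.sum_filter]
    refine Finset.sum_congr rfl fun k _ => ?_
    by_cases hk : μ k = γ
    · simp [hk, hC0 k hk]
    · have hne : μ k - γ ≠ 0 := sub_ne_zero.2 hk
      rw [if_pos hk, myIntExp _ _ hne]
      ring
  -- conclude
  have hwt : E t * w t ≤ Bω + ∑ k ∈ Finset.univ.filter (fun k => μ k ≠ γ),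
      (Real.exp ((μ k - γ) * t) - 1) / (μ k - γ) * C k := by
    have : E t * w t ≤ Bω + ∫ τ in (0:ℝ)..t, E τ * g τ := by
      simp only [hF] at hFt
      linarith
    rwa [hint2, hsum] at this
  have hEpos : 0 < E t := Real.exp_pos _
  have hut : u j t = Real.exp (lam j * t) * v t := by
    simp only [hv, ← mul_assoc, ← Real.exp_add]
    simp
  have hvt : v t ≤ w t := hvw t ht
  have hfinal : u j t ≤ Real.exp (lam j * t) * (E t)⁻¹ *
      (Bω + ∑ k ∈ Finset.univ.filter (fun k => μ k ≠ γ),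
        (Real.exp ((μ k - γ) * t) - 1) / (μ k - γ) * C k) := by
    rw [hut]
    have h1 : Real.exp (lam j * t) * v t ≤ Real.exp (lam j * t) * w t :=
      mul_le_mul_of_nonneg_left hvt (Real.exp_pos _).le
    refine h1.trans ?_
    rw [mul_assoc]
    refine mul_le_mul_of_nonneg_left ?_ (Real.exp_pos _).le
    rw [inv_mul_eq_div, le_div_iff₀ hEpos, mul_comm]
    exact hwt
  refine hfinal.trans_eq ?_
  have hEinv : Real.exp (lam j * t) * (E t)⁻¹ = Real.exp (γ * t) := by
    simp only [hE]
    rw [← Real.exp_neg, ← Real.exp_add]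
    congr 1
    rw [hγ]; ring
  have hterm : Real.exp (γ * t) * (∑ k ∈ Finset.univ.filter (fun k => μ k ≠ γ),
      (Real.exp ((μ k - γ) * t) - 1) / (μ k - γ) * C k)
      = ∑ k ∈ Finset.univ.filter (fun k => μ k ≠ γ),
        (Real.exp (μ k * t) - Real.exp (γ * t)) / (μ k - γ)
          * ((∑ m, A j k m * ω m) + ∑ i ∈ Finset.univ.erase j,
              H j i * ∑ m, G i k m * ω m) := by
    rw [Finset.mul_sum]
    refine Finset.sum_congr rfl fun k hk => ?_
    have hk' : μ k ≠ γ := by simpa using (Finset.mem_filter.1 hk).2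
    have hne : μ k - γ ≠ 0 := sub_ne_zero.2 hk'
    have hexp : Real.exp (γ * t) * Real.exp ((μ k - γ) * t) = Real.exp (μ k * t) := by
      rw [← Real.exp_add]; congr 1; ring
    simp only [hC]
    exact myAlg _ _ _ _ _ hne hexp
  rw [hEinv, mul_add, hterm]
end

section
/- Assume the exponential tracking bound |x_i(t,ξ,α) − x_i(t,ζ,α)| ≤ Σ_{n,k} e^{γ_k t} G_{i,k}^n |ξ_n − ζ_n| holds for all t ≥ 0, where all γ_k < λ_{i'} for every unstable rate λ_{i'} > 0, and that |N_{i'}(x,α(x)) − N_{i'}(z,α(z))| ≤ Σ_i H_{i'}^i |x_i − z_i| on the invariant ball. Then the Lyapunov–Perron operator Ψ[α](ξ) = −∫₀^∞ e^{−Λ_u t} N_u(x(t,ξ,α), α(x(t,ξ,α))) dt satisfies, componentwise, Lip(Ψ[α])_{i'}^n ≤ Σ_k (λ_{i'} − γ_k)⁻¹ H_{i'}^i G_{i,k}^n. -/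
open MeasureTheory

lemma exp_int (b : ℝ) (hb : 0 < b) :
    (∫ t in Set.Ioi (0:ℝ), Real.exp (-(b * t))) = b⁻¹ := by
  have := MeasureTheory.integral_comp_mul_left_Ioi (fun x => Real.exp (-x)) 0 hb
  simp only [mul_zero, integral_exp_neg_Ioi, neg_zero, Real.exp_zero, smul_eq_mul,
    mul_one] at this
  exact this

/-- Componentwise Lipschitz bound for the Lyapunov–Perron operator. -/
theorem stmt11 {ms mu K : ℕ}
    (Xs : Fin ms → Type*) [∀ i, NormedAddCommGroup (Xs i)]
    (Xu : Fin mu → Type*) [∀ i', NormedAddCommGroup (Xu i')]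
    [∀ i', NormedSpace ℝ (Xu i')] [∀ i', CompleteSpace (Xu i')]
    (B : Set (∀ i, Xs i))
    (flow : ℝ → (∀ i, Xs i) → (∀ i, Xs i))
    (hflowB : ∀ t, 0 ≤ t → ∀ ξ ∈ B, flow t ξ ∈ B)
    (γ : Fin K → ℝ) (lam' : Fin mu → ℝ)
    (hlam : ∀ i', 0 < lam' i') (hgap : ∀ k i', γ k < lam' i')
    (G : Fin ms → Fin K → Fin ms → ℝ)
    (H : Fin mu → Fin ms → ℝ) (hH : ∀ i' i, 0 ≤ H i' i)
    -- exponential tracking estimate on the invariant ball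
    (htrack : ∀ ξ ∈ B, ∀ ζ ∈ B, ∀ t, 0 ≤ t → ∀ i,
      ‖flow t ξ i - flow t ζ i‖ ≤ ∑ n, ∑ k, Real.exp (γ k * t) * G i k n * ‖ξ n - ζ n‖)
    -- componentwise Lipschitz bound on the composed nonlinearity ξ ↦ N_{i'}(ξ, α(ξ))
    (Nc : (i' : Fin mu) → (∀ i, Xs i) → Xu i')
    (hN : ∀ i', ∀ p ∈ B, ∀ q ∈ B, ‖Nc i' p - Nc i' q‖ ≤ ∑ i, H i' i * ‖p i - q i‖)
    -- the backward unstable semigroup e^{-Λ_{i'} t} and its norm bound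
    (T : (i' : Fin mu) → ℝ → (Xu i' →L[ℝ] Xu i'))
    (hT : ∀ i' t, 0 ≤ t → ∀ w, ‖T i' t w‖ ≤ Real.exp (-(lam' i' * t)) * ‖w‖)
    (hint : ∀ i', ∀ ξ ∈ B,
      IntegrableOn (fun t => T i' t (Nc i' (flow t ξ))) (Set.Ioi 0)) :
    ∀ (i' : Fin mu) (n : Fin ms), ∀ ξ ∈ B, ∀ ζ ∈ B, (∀ i, i ≠ n → ξ i = ζ i) →
      ‖(-∫ t in Set.Ioi (0:ℝ), T i' t (Nc i' (flow t ξ)))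
          - (-∫ t in Set.Ioi (0:ℝ), T i' t (Nc i' (flow t ζ)))‖
        ≤ (∑ k, (lam' i' - γ k)⁻¹ * ∑ i, H i' i * G i k n) * ‖ξ n - ζ n‖ := by
  intro i' n ξ hξ ζ hζ heq
  set d := ‖ξ n - ζ n‖ with hd
  set lam := lam' i' with hlamdef
  set f : ℝ → Xu i' := fun t => T i' t (Nc i' (flow t ξ)) with hf
  set g : ℝ → Xu i' := fun t => T i' t (Nc i' (flow t ζ)) with hg
  have hfi := hint i' ξ hξ
  have hgi := hint i' ζ hζ
  -- majorant
  set h : ℝ → ℝ := fun t => ∑ k, Real.exp (-((lam - γ k) * t)) * ((∑ i, H i' i * G i k n) * d)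
    with hh
  have hb : ∀ k : Fin K, 0 < lam - γ k := fun k => sub_pos.mpr (hgap k i')
  have hhint : IntegrableOn h (Set.Ioi 0) := by
    apply integrable_finset_sum
    intro k _
    have : IntegrableOn (fun t => Real.exp (-((lam - γ k) * t))) (Set.Ioi 0) := by
      simpa only [neg_mul] using exp_neg_integrableOn_Ioi 0 (hb k)
    exact this.mul_const _
  -- pointwise bound
  have hptwise : ∀ t ∈ Set.Ioi (0:ℝ), ‖f t - g t‖ ≤ h t := by
    intro t ht
    have ht0 : (0:ℝ) ≤ t := le_of_lt ht
    have hmem1 := hflowB t ht0 ξ hξ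
    have hmem2 := hflowB t ht0 ζ hζ
    have step1 : ‖f t - g t‖ ≤ Real.exp (-(lam * t)) * ‖Nc i' (flow t ξ) - Nc i' (flow t ζ)‖ := by
      have : f t - g t = T i' t (Nc i' (flow t ξ) - Nc i' (flow t ζ)) := by
        simp [hf, hg, map_sub]
      rw [this]
      exact hT i' t ht0 _
    have step2 : ‖Nc i' (flow t ξ) - Nc i' (flow t ζ)‖
        ≤ ∑ i, H i' i * (∑ k, Real.exp (γ k * t) * G i k n * d) := by
      refine le_trans (hN i' _ hmem1 _ hmem2) (Finset.sum_le_sum fun i _ => ?_)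
      refine mul_le_mul_of_nonneg_left ?_ (hH i' i)
      have := htrack ξ hξ ζ hζ t ht0 i
      have hred : (∑ n', ∑ k, Real.exp (γ k * t) * G i k n' * ‖ξ n' - ζ n'‖)
          = ∑ k, Real.exp (γ k * t) * G i k n * d := by
        rw [Finset.sum_eq_single n]
        · intro b _ hbn
          simp [heq b hbn]
        · intro hn; exact absurd (Finset.mem_univ n) hn
      rw [hred] at this
      exact this
    have key : Real.exp (-(lam * t)) * (∑ i, H i' i * (∑ k, Real.exp (γ k * t) * G i k n * d))
        = h t := by
      simp only [hh, Finset.mul_sum, Finset.sum_mul]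
      rw [Finset.sum_comm]
      refine Finset.sum_congr rfl fun k _ => Finset.sum_congr rfl fun i _ => ?_
      rw [show -((lam - γ k) * t) = γ k * t + -(lam * t) by ring, Real.exp_add]
      ring
    calc ‖f t - g t‖ ≤ Real.exp (-(lam * t)) * ‖Nc i' (flow t ξ) - Nc i' (flow t ζ)‖ := step1
      _ ≤ Real.exp (-(lam * t)) * (∑ i, H i' i * (∑ k, Real.exp (γ k * t) * G i k n * d)) :=
          mul_le_mul_of_nonneg_left step2 (Real.exp_nonneg _)
      _ = h t := key
  have hnorm : ‖(-∫ t in Set.Ioi (0:ℝ), f t) - (-∫ t in Set.Ioi (0:ℝ), g t)‖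
      = ‖∫ t in Set.Ioi (0:ℝ), (f t - g t)‖ := by
    rw [integral_sub hfi hgi]
    rw [show (-∫ t in Set.Ioi (0:ℝ), f t) - (-∫ t in Set.Ioi (0:ℝ), g t)
        = -((∫ t in Set.Ioi (0:ℝ), f t) - ∫ t in Set.Ioi (0:ℝ), g t) by abel, norm_neg]
  rw [hnorm]
  have hae : ∀ᵐ t ∂(volume.restrict (Set.Ioi (0:ℝ))), ‖f t - g t‖ ≤ h t :=
    (ae_restrict_iff' measurableSet_Ioi).mpr (Filter.Eventually.of_forall hptwise)
  refine le_trans (norm_integral_le_of_norm_le hhint hae) (le_of_eq ?_)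
  rw [hh]
  rw [integral_finset_sum]
  · rw [Finset.sum_mul]
    refine Finset.sum_congr rfl fun k _ => ?_
    rw [integral_mul_const, exp_int _ (hb k)]
    ring
  · intro k _
    have : IntegrableOn (fun t => Real.exp (-((lam - γ k) * t))) (Set.Ioi 0) := by
      simpa only [neg_mul] using exp_neg_integrableOn_Ioi 0 (hb k)
    exact this.mul_const _
end
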